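/- Assume β ∈ [0,1] and M > 6. There exist constants c, C > 0 (depending only on β and M) such that for all ω₁ > 1 one has c · ω₁^{2β − 1/2 − M/2} ≤ C²³⁴[n⁰¹, n⁰¹, n⁰¹](ω₁) ≤ C · ω₁^{2β − 1/2 − M/2}. -/

import Mathlib

/-!
For the upper bound, on `Dom ω₁` the largest frequency satisfies `ω₄ ≥ ω₁ / 2`, so
`ω₄^β n⁰¹(ω₄) ≤ (ω₁ / 2)^(β - M/2)`. Bounding `min {√ω₂, √ω₃} ≤ ω₂^(1/4) ω₃^(1/4)`, the remaining
factors are dominated by `φ(ω₂) φ(ω₃)` with `φ = ⟨·⟩^(β + 1/4 - M/2)`, which is integrable as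
`M > 6`, and the shear `(ω₃, ω₄) ↦ (ω₃, ω₂)` turns the integral of `φ(ω₂) φ(ω₃)` over the plane
into `(∫ φ)²`. For the lower bound, the integrand is `≳ ω₁^(β - M/2)` on the box
`[1/2, 1] × [ω₁, ω₁ + 1]`, where `ω₂, ω₃ ≍ 1` and `ω₄ ≍ ω₁`.
-/

open MeasureTheory Real

noncomputable section

/-- Japanese bracket ⟨ω⟩ = (1 + ω²)^{1/2}. -/
def jb (ω : ℝ) : ℝ := Real.sqrt (1 + ω ^ 2)

/-- n⁰¹(ω) = ⟨ω⟩^{-M/2}. -/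
def n01 (M : ℝ) (ω : ℝ) : ℝ := jb ω ^ (-(M / 2))

/-- The operator C₂₁²³⁴, with ω₂ = ω₃ + ω₄ − ω₁. -/
def C21op (β : ℝ) (k l m : ℝ → ℝ) (ω₁ : ℝ) : ℝ :=
  64 * π ^ 3 * ω₁ ^ (β - 1/2) *
    ∫ ω₃ in (0:ℝ)..(ω₁ / 2), ∫ ω₄ in (ω₁ - ω₃)..ω₁,
      (ω₃ + ω₄ - ω₁) ^ (β + 1/2) * ω₃ ^ β * ω₄ ^ β *
        (k (ω₃ + ω₄ - ω₁) * l ω₃ * m ω₄)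

/-- The operator C₂₂²³⁴, with ω₂ = ω₃ + ω₄ − ω₁. -/
def C22op (β : ℝ) (k l m : ℝ → ℝ) (ω₁ : ℝ) : ℝ :=
  64 * π ^ 3 * ω₁ ^ (β - 1/2) *
    ∫ ω₃ in (ω₁ / 2)..ω₁, ∫ ω₄ in ω₃..ω₁,
      (ω₃ + ω₄ - ω₁) ^ (β + 1/2) * ω₃ ^ β * ω₄ ^ β *
        (k (ω₃ + ω₄ - ω₁) * l ω₃ * m ω₄)

/-- The operator C₃²³⁴, with ω₂ = ω₃ + ω₄ − ω₁. -/
def C3op (β : ℝ) (k l m : ℝ → ℝ) (ω₁ : ℝ) : ℝ :=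
  64 * π ^ 3 * ω₁ ^ (β - 1/2) *
    ∫ ω₃ in (0:ℝ)..ω₁, ∫ ω₄ in Set.Ioi ω₁,
      (ω₃ + ω₄ - ω₁) ^ β * ω₃ ^ (β + 1/2) * ω₄ ^ β *
        (k (ω₃ + ω₄ - ω₁) * l ω₃ * m ω₄)

/-- The operator C₁²³⁴, with ω₂ = ω₃ + ω₄ − ω₁. -/
def C1op (β : ℝ) (k l m : ℝ → ℝ) (ω₁ : ℝ) : ℝ :=
  64 * π ^ 3 * ω₁ ^ β *
    ∫ ω₃ in Set.Ioi ω₁, ∫ ω₄ in Set.Ioi ω₃,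
      (ω₃ + ω₄ - ω₁) ^ β * ω₃ ^ β * ω₄ ^ β *
        (k (ω₃ + ω₄ - ω₁) * l ω₃ * m ω₄)

/-- The full domain of integration {0 ≤ ω₃ ≤ ω₄, ω₃ + ω₄ ≥ ω₁} ⊂ ℝ². -/
def Dom (ω₁ : ℝ) : Set (ℝ × ℝ) := {p | 0 ≤ p.1 ∧ p.1 ≤ p.2 ∧ ω₁ ≤ p.1 + p.2}

/-- The cross-section factor min{√ω₁, √ω₂, √ω₃}, with ω₂ = ω₃ + ω₄ − ω₁,
where p = (ω₃, ω₄). -/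
def crossMin (ω₁ : ℝ) (p : ℝ × ℝ) : ℝ :=
  min (Real.sqrt ω₁) (min (Real.sqrt (p.1 + p.2 - ω₁)) (Real.sqrt p.1))

/-- The operator C^{j₁j₂j₃}[k,l,m](ω₁) where the factor is k(ω_{j₁}) l(ω_{j₂}) m(ω_{j₃}),
with ω₂ = ω₃ + ω₄ − ω₁ and p = (ω₃, ω₄); here the selection of frequencies is passed
as a function `sel : (ℝ × ℝ) → ℝ × ℝ × ℝ` giving (ω_{j₁}, ω_{j₂}, ω_{j₃}). -/
def Cfull (β : ℝ) (k l m : ℝ → ℝ) (sel : ℝ → ℝ × ℝ → ℝ × ℝ × ℝ) (ω₁ : ℝ) : ℝ :=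
  64 * π ^ 3 * ω₁ ^ (β - 1/2) *
    ∫ p in Dom ω₁,
      ((p.1 + p.2 - ω₁) * p.1 * p.2) ^ β * crossMin ω₁ p *
        (k (sel ω₁ p).1 * l (sel ω₁ p).2.1 * m (sel ω₁ p).2.2)

/-- C²³⁴[k,l,m](ω₁): integrand k(ω₂) l(ω₃) m(ω₄). -/
def C234 (β : ℝ) (k l m : ℝ → ℝ) : ℝ → ℝ :=
  Cfull β k l m (fun ω₁ p => (p.1 + p.2 - ω₁, p.1, p.2))

/-- C¹²⁴[k,l,m](ω₁): integrand k(ω₁) l(ω₂) m(ω₄). -/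
def C124 (β : ℝ) (k l m : ℝ → ℝ) : ℝ → ℝ :=
  Cfull β k l m (fun ω₁ p => (ω₁, p.1 + p.2 - ω₁, p.2))

/-- C¹³⁴[k,l,m](ω₁): integrand k(ω₁) l(ω₃) m(ω₄). -/
def C134 (β : ℝ) (k l m : ℝ → ℝ) : ℝ → ℝ :=
  Cfull β k l m (fun ω₁ p => (ω₁, p.1, p.2))

/-- C¹²³[k,l,m](ω₁): integrand k(ω₁) l(ω₂) m(ω₃). -/
def C123 (β : ℝ) (k l m : ℝ → ℝ) : ℝ → ℝ :=
  Cfull β k l m (fun ω₁ p => (ω₁, p.1 + p.2 - ω₁, p.1))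

lemma jb_pos (ω : ℝ) : 0 < jb ω := Real.sqrt_pos.2 (by positivity)

lemma le_jb (ω : ℝ) : ω ≤ jb ω :=
  (le_abs_self ω).trans <| Real.abs_le_sqrt (by linarith)

lemma jb_le_one_add {ω : ℝ} (hω : 0 ≤ ω) : jb ω ≤ 1 + ω :=
  Real.sqrt_le_iff.2 ⟨by positivity, by nlinarith⟩

lemma continuous_jb : Continuous jb := by
  unfold jb; fun_prop

lemma jb_rpow (ω s : ℝ) : jb ω ^ s = (1 + ‖ω‖ ^ 2) ^ (s / 2) := by
  rw [jb, Real.sqrt_eq_rpow, ← Real.rpow_mul (by positivity), Real.norm_eq_abs, sq_abs]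
  ring_nf

lemma integrable_jb_rpow {s : ℝ} (hs : s < -1) : Integrable (fun ω => jb ω ^ s) := by
  have hdim : (Module.finrank ℝ ℝ : ℝ) < -s := by
    rw [Module.finrank_self, Nat.cast_one]
    linarith
  simpa [jb_rpow] using integrable_rpow_neg_one_add_norm_sq (μ := volume) hdim

lemma n01_pos (M ω : ℝ) : 0 < n01 M ω := Real.rpow_pos_of_pos (jb_pos ω) _

lemma continuous_n01 (M : ℝ) : Continuous (n01 M) :=
  continuous_jb.rpow_const fun ω => Or.inl (jb_pos ω).ne'

lemma rpow_mul_n01_le {M s u : ℝ} (hs : 0 ≤ s) (hu : 0 ≤ u) :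
    u ^ s * n01 M u ≤ jb u ^ (s - M / 2) := by
  rw [sub_eq_add_neg, Real.rpow_add (jb_pos u)]
  exact mul_le_mul_of_nonneg_right (Real.rpow_le_rpow hu (le_jb u) hs) (n01_pos M u).le

lemma rpow_mul_n01_le_of_le {M s u a : ℝ} (hs : 0 ≤ s) (hsM : s ≤ M / 2) (ha : 0 < a)
    (hau : a ≤ u) : u ^ s * n01 M u ≤ a ^ (s - M / 2) :=
  (rpow_mul_n01_le hs (ha.le.trans hau)).trans <|
    Real.rpow_le_rpow_of_nonpos ha (hau.trans (le_jb u)) (by linarith)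

lemma rpow_neg_le_n01 {M u a : ℝ} (hM : 0 ≤ M) (hu : 0 ≤ u) (ha : 1 + u ≤ a) :
    a ^ (-(M / 2)) ≤ n01 M u :=
  Real.rpow_le_rpow_of_nonpos (jb_pos u) ((jb_le_one_add hu).trans ha) (by linarith)

lemma integrable_comp_add_sub_mul {f g : ℝ → ℝ} (hf : Integrable f) (hg : Integrable g) (c : ℝ) :
    Integrable (fun p : ℝ × ℝ => f (p.1 + p.2 - c) * g p.1) := by
  have hprod : Integrable (fun p : ℝ × ℝ => g p.1 * f (p.2 - c)) (volume.prod volume) :=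
    hg.mul_prod (hf.comp_sub_right c)
  rw [Measure.volume_eq_prod]
  refine (((measurePreserving_prod_add volume volume).integrable_comp
    hprod.aestronglyMeasurable).2 hprod).congr (ae_of_all _ fun p => ?_)
  simp only [Function.comp_apply, add_sub_assoc, mul_comm]

lemma integral_comp_add_sub_mul (f g : ℝ → ℝ) (c : ℝ) :
    ∫ p : ℝ × ℝ, f (p.1 + p.2 - c) * g p.1 = (∫ ω, f ω) * ∫ ω, g ω := by
  have hshear := (measurePreserving_prod_add (volume : Measure ℝ) volume).integral_comp
    (MeasurableEquiv.shearAddRight ℝ).measurableEmbedding (fun p => g p.1 * f (p.2 - c))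
  simp only [add_sub_assoc] at hshear ⊢
  rw [Measure.volume_eq_prod]
  simp_rw [mul_comm (f _)]
  rw [hshear, integral_prod_mul g (fun y => f (y - c)), integral_sub_right_eq_self, mul_comm]

lemma min_sqrt_le_rpow_mul_rpow {a b : ℝ} (ha : 0 ≤ a) (hb : 0 ≤ b) :
    min √a √b ≤ a ^ (4 : ℝ)⁻¹ * b ^ (4 : ℝ)⁻¹ := by
  wlog hab : a ≤ b generalizing a b
  · rw [min_comm, mul_comm]
    exact this hb ha (le_of_not_ge hab)
  calc min √a √b ≤ √a := min_le_left _ _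
    _ = a ^ (4 : ℝ)⁻¹ * a ^ (4 : ℝ)⁻¹ := by
      rw [Real.sqrt_eq_rpow, ← Real.rpow_add' ha (by norm_num)]
      norm_num
    _ ≤ a ^ (4 : ℝ)⁻¹ * b ^ (4 : ℝ)⁻¹ := by gcongr

lemma crossMin_nonneg (ω₁ : ℝ) (p : ℝ × ℝ) : 0 ≤ crossMin ω₁ p :=
  le_min (Real.sqrt_nonneg _) (le_min (Real.sqrt_nonneg _) (Real.sqrt_nonneg _))

lemma crossMin_le {ω₁ : ℝ} {p : ℝ × ℝ} (h₂ : 0 ≤ p.1 + p.2 - ω₁) (h₃ : 0 ≤ p.1) :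
    crossMin ω₁ p ≤ (p.1 + p.2 - ω₁) ^ (4 : ℝ)⁻¹ * p.1 ^ (4 : ℝ)⁻¹ :=
  (min_le_right _ _).trans (min_sqrt_le_rpow_mul_rpow h₂ h₃)

lemma le_crossMin {ω₁ : ℝ} {p : ℝ × ℝ} (h₁ : 1 / 4 ≤ ω₁) (h₂ : 1 / 4 ≤ p.1 + p.2 - ω₁)
    (h₃ : 1 / 4 ≤ p.1) : 1 / 2 ≤ crossMin ω₁ p := by
  have half_le_sqrt : ∀ {a : ℝ}, 1 / 4 ≤ a → 1 / 2 ≤ √a := fun ha =>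
    Real.le_sqrt_of_sq_le (by linarith)
  exact le_min (half_le_sqrt h₁) (le_min (half_le_sqrt h₂) (half_le_sqrt h₃))

lemma measurableSet_Dom (ω₁ : ℝ) : MeasurableSet (Dom ω₁) :=
  (measurableSet_le measurable_const measurable_fst).inter
    ((measurableSet_le measurable_fst measurable_snd).inter
      (measurableSet_le measurable_const (measurable_fst.add measurable_snd)))

def c234Integrand (β M ω₁ : ℝ) (p : ℝ × ℝ) : ℝ :=
  ((p.1 + p.2 - ω₁) * p.1 * p.2) ^ β * crossMin ω₁ p *
    (n01 M (p.1 + p.2 - ω₁) * n01 M p.1 * n01 M p.2)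

lemma C234_n01_eq_integral (β M ω₁ : ℝ) : C234 β (n01 M) (n01 M) (n01 M) ω₁ =
    64 * π ^ 3 * ω₁ ^ (β - 1 / 2) * ∫ p in Dom ω₁, c234Integrand β M ω₁ p := rfl

def c234Majorant (β M ω₁ : ℝ) (p : ℝ × ℝ) : ℝ :=
  (ω₁ / 2) ^ (β - M / 2) *
    (jb (p.1 + p.2 - ω₁) ^ (β + 4⁻¹ - M / 2) * jb p.1 ^ (β + 4⁻¹ - M / 2))

section Integrand

variable {β M ω₁ : ℝ}

lemma continuous_c234Integrand (hβ : 0 ≤ β) : Continuous (c234Integrand β M ω₁) := by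
  unfold c234Integrand crossMin
  have := continuous_n01 M
  exact ((Continuous.rpow_const (by fun_prop) fun _ => Or.inr hβ).mul (by fun_prop)).mul
    (by fun_prop)

lemma c234Integrand_nonneg {p : ℝ × ℝ} (hp : p ∈ Dom ω₁) : 0 ≤ c234Integrand β M ω₁ p := by
  obtain ⟨h₃, h₃₄, h₁⟩ := hp
  have h₂ : 0 ≤ p.1 + p.2 - ω₁ := by linarith
  exact mul_nonneg
    (mul_nonneg (Real.rpow_nonneg (mul_nonneg (mul_nonneg h₂ h₃) (h₃.trans h₃₄)) β)
      (crossMin_nonneg ω₁ p))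
    (mul_nonneg (mul_nonneg (n01_pos M _).le (n01_pos M _).le) (n01_pos M _).le)

lemma c234Integrand_le (hβ : 0 ≤ β) (hβM : β ≤ M / 2) (hω₁ : 0 < ω₁) {p : ℝ × ℝ}
    (hp : p ∈ Dom ω₁) :
    c234Integrand β M ω₁ p ≤ c234Majorant β M ω₁ p := by
  obtain ⟨x, y⟩ := p
  obtain ⟨hx, hxy, hsum⟩ := hp
  dsimp only at hx hxy hsum ⊢
  have hw : 0 ≤ x + y - ω₁ := by linarith
  have hy : 0 ≤ y := hx.trans hxy
  set w := x + y - ω₁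
  have hn : ∀ u, 0 ≤ n01 M u := fun u => (n01_pos M u).le
  have hwb := rpow_mul_n01_le (M := M) (by positivity : 0 ≤ β + 4⁻¹) hw
  have hxb := rpow_mul_n01_le (M := M) (by positivity : 0 ≤ β + 4⁻¹) hx
  have hyb := rpow_mul_n01_le_of_le hβ hβM (half_pos hω₁) (by linarith : ω₁ / 2 ≤ y)
  calc c234Integrand β M ω₁ (x, y)
      = w ^ β * x ^ β * y ^ β * crossMin ω₁ (x, y) * (n01 M w * n01 M x * n01 M y) := by
        rw [c234Integrand, Real.mul_rpow (mul_nonneg hw hx) hy, Real.mul_rpow hw hx]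
    _ ≤ w ^ β * x ^ β * y ^ β * (w ^ (4 : ℝ)⁻¹ * x ^ (4 : ℝ)⁻¹) *
          (n01 M w * n01 M x * n01 M y) := by
        gcongr
        · exact mul_nonneg (mul_nonneg (hn w) (hn x)) (hn y)
        · exact crossMin_le (p := (x, y)) hw hx
    _ = (w ^ (β + 4⁻¹) * n01 M w) * (x ^ (β + 4⁻¹) * n01 M x) * (y ^ β * n01 M y) := by
        rw [Real.rpow_add' hw (by positivity), Real.rpow_add' hx (by positivity)]
        ring
    _ ≤ jb w ^ (β + 4⁻¹ - M / 2) * jb x ^ (β + 4⁻¹ - M / 2) * (ω₁ / 2) ^ (β - M / 2) :=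
        mul_le_mul (mul_le_mul hwb hxb (mul_nonneg (by positivity) (hn x))
            (Real.rpow_nonneg (jb_pos w).le _)) hyb (mul_nonneg (by positivity) (hn y))
          (mul_nonneg (Real.rpow_nonneg (jb_pos w).le _) (Real.rpow_nonneg (jb_pos x).le _))
    _ = c234Majorant β M ω₁ (x, y) := by
        rw [c234Majorant]
        ring

lemma le_c234Integrand (hβ : 0 ≤ β) (hM : 0 ≤ M) (hω₁ : 1 ≤ ω₁) {p : ℝ × ℝ}
    (hp : p ∈ Set.Icc (1 / 2 : ℝ) 1 ×ˢ Set.Icc ω₁ (ω₁ + 1)) :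
    (4 : ℝ)⁻¹ ^ β * (3 ^ (-(M / 2))) ^ 3 / 2 * ω₁ ^ (β - M / 2) ≤ c234Integrand β M ω₁ p := by
  obtain ⟨x, y⟩ := p
  obtain ⟨⟨hx₀, hx₁⟩, ⟨hy₀, hy₁⟩⟩ := hp
  dsimp only at hx₀ hx₁ hy₀ hy₁
  have hω₁₀ : 0 < ω₁ := by linarith
  have hw₀ : 1 / 2 ≤ x + y - ω₁ := by linarith
  have hw₁ : x + y - ω₁ ≤ 2 := by linarith
  set w := x + y - ω₁
  have hn : ∀ u, 0 ≤ n01 M u := fun u => (n01_pos M u).le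
  have hwx : 1 / 2 * (1 / 2) ≤ w * x := mul_le_mul hw₀ hx₀ (by norm_num) (by linarith)
  have hwxy₀ : ω₁ / 4 ≤ w * x * y := by nlinarith [mul_le_mul hwx hy₀ hω₁₀.le (by linarith)]
  have hwxy : (ω₁ / 4) ^ β ≤ (w * x * y) ^ β := Real.rpow_le_rpow (by positivity) hwxy₀ hβ
  have hcm : 1 / 2 ≤ crossMin ω₁ (x, y) := le_crossMin (by linarith) (by linarith) (by linarith)
  have hnw : (3 : ℝ) ^ (-(M / 2)) ≤ n01 M w := rpow_neg_le_n01 hM (by linarith) (by linarith)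
  have hnx : (3 : ℝ) ^ (-(M / 2)) ≤ n01 M x := rpow_neg_le_n01 hM (by linarith) (by linarith)
  have hny : (3 * ω₁) ^ (-(M / 2)) ≤ n01 M y := rpow_neg_le_n01 hM (by linarith) (by linarith)
  calc (4 : ℝ)⁻¹ ^ β * (3 ^ (-(M / 2))) ^ 3 / 2 * ω₁ ^ (β - M / 2)
      = (ω₁ / 4) ^ β * (1 / 2) *
          (3 ^ (-(M / 2)) * 3 ^ (-(M / 2)) * (3 * ω₁) ^ (-(M / 2))) := by
        rw [div_eq_mul_inv ω₁, Real.mul_rpow hω₁₀.le (by norm_num),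
          Real.mul_rpow (by norm_num) hω₁₀.le, sub_eq_add_neg, Real.rpow_add hω₁₀]
        ring
    _ ≤ c234Integrand β M ω₁ (x, y) :=
        mul_le_mul (mul_le_mul hwxy hcm (by norm_num) (Real.rpow_nonneg (by linarith) _))
          (mul_le_mul (mul_le_mul hnw hnx (by positivity) (hn w)) hny (by positivity)
            (mul_nonneg (hn w) (hn x)))
          (by positivity) (mul_nonneg (Real.rpow_nonneg (by linarith) _) (crossMin_nonneg _ _))

lemma c234Majorant_nonneg (p : ℝ × ℝ) (hω₁ : 0 ≤ ω₁) : 0 ≤ c234Majorant β M ω₁ p :=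
  mul_nonneg (by positivity)
    (mul_nonneg (Real.rpow_nonneg (jb_pos _).le _) (Real.rpow_nonneg (jb_pos _).le _))

lemma integrable_c234Majorant (hβM : β + 5 / 4 < M / 2) (ω₁ : ℝ) :
    Integrable (c234Majorant β M ω₁) :=
  have hφ := integrable_jb_rpow (s := β + 4⁻¹ - M / 2) (by linarith)
  (integrable_comp_add_sub_mul hφ hφ ω₁).const_mul _

lemma integral_c234Majorant (hω₁ : 0 ≤ ω₁) : ∫ p, c234Majorant β M ω₁ p =
    2 ^ (M / 2 - β) * (∫ ω, jb ω ^ (β + 4⁻¹ - M / 2)) ^ 2 * ω₁ ^ (β - M / 2) := by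
  unfold c234Majorant
  rw [integral_const_mul, integral_comp_add_sub_mul (fun ω => jb ω ^ (β + 4⁻¹ - M / 2))
    (fun ω => jb ω ^ (β + 4⁻¹ - M / 2)),
    Real.div_rpow hω₁ zero_le_two, div_eq_mul_inv, ← Real.rpow_neg zero_le_two, neg_sub]
  ring

lemma integrableOn_c234Integrand (hβ : 0 ≤ β) (hβM : β + 5 / 4 < M / 2) (hω₁ : 0 < ω₁) :
    IntegrableOn (c234Integrand β M ω₁) (Dom ω₁) := by
  refine (integrable_c234Majorant hβM ω₁).integrableOn.mono'
    (continuous_c234Integrand hβ).aestronglyMeasurable ?_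
  filter_upwards [ae_restrict_mem (measurableSet_Dom ω₁)] with p hp
  rw [Real.norm_eq_abs, abs_of_nonneg (c234Integrand_nonneg hp)]
  exact c234Integrand_le hβ (by linarith) hω₁ hp

lemma integral_c234Integrand_le (hβ : 0 ≤ β) (hβM : β + 5 / 4 < M / 2) (hω₁ : 0 < ω₁) :
    ∫ p in Dom ω₁, c234Integrand β M ω₁ p ≤
      2 ^ (M / 2 - β) * (∫ ω, jb ω ^ (β + 4⁻¹ - M / 2)) ^ 2 * ω₁ ^ (β - M / 2) :=
  calc ∫ p in Dom ω₁, c234Integrand β M ω₁ p ≤ ∫ p in Dom ω₁, c234Majorant β M ω₁ p :=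
        setIntegral_mono_on (integrableOn_c234Integrand hβ hβM hω₁)
          (integrable_c234Majorant hβM ω₁).integrableOn (measurableSet_Dom ω₁)
          fun p hp => c234Integrand_le hβ (by linarith) hω₁ hp
    _ ≤ ∫ p, c234Majorant β M ω₁ p :=
        setIntegral_le_integral (integrable_c234Majorant hβM ω₁)
          (ae_of_all _ fun p => c234Majorant_nonneg p hω₁.le)
    _ = _ := integral_c234Majorant hω₁.le

lemma le_integral_c234Integrand (hβ : 0 ≤ β) (hβM : β + 5 / 4 < M / 2) (hω₁ : 1 ≤ ω₁) :
    (4 : ℝ)⁻¹ ^ β * (3 ^ (-(M / 2))) ^ 3 / 4 * ω₁ ^ (β - M / 2) ≤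
      ∫ p in Dom ω₁, c234Integrand β M ω₁ p := by
  set R := Set.Icc (1 / 2 : ℝ) 1 ×ˢ Set.Icc ω₁ (ω₁ + 1)
  have hRDom : R ⊆ Dom ω₁ := by
    rintro p ⟨⟨hx₀, hx₁⟩, ⟨hy₀, -⟩⟩
    exact ⟨by linarith, by linarith, by linarith⟩
  have hvolR : volume.real R = 1 / 2 := by
    rw [Measure.volume_eq_prod, measureReal_prod_prod, Real.volume_real_Icc, Real.volume_real_Icc]
    norm_num
  have hint := integrableOn_c234Integrand hβ hβM (by linarith : 0 < ω₁)
  calc (4 : ℝ)⁻¹ ^ β * (3 ^ (-(M / 2))) ^ 3 / 4 * ω₁ ^ (β - M / 2)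
      = (4 : ℝ)⁻¹ ^ β * (3 ^ (-(M / 2))) ^ 3 / 2 * ω₁ ^ (β - M / 2) * volume.real R := by
        rw [hvolR]; ring
    _ ≤ ∫ p in R, c234Integrand β M ω₁ p :=
        setIntegral_ge_of_const_le_real (measurableSet_Icc.prod measurableSet_Icc)
          (isCompact_Icc.prod isCompact_Icc).measure_lt_top.ne
          (fun p hp => le_c234Integrand hβ (by linarith) hω₁ hp) (hint.mono_set hRDom)
    _ ≤ ∫ p in Dom ω₁, c234Integrand β M ω₁ p :=
        setIntegral_mono_set hint
          ((ae_restrict_iff' (measurableSet_Dom ω₁)).2 (ae_of_all _ fun _ => c234Integrand_nonneg))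
          hRDom.eventuallyLE

end Integrand

/-- Two-sided bound: C²³⁴[n⁰¹,n⁰¹,n⁰¹](ω₁) ≈ ω₁^{2β − 1/2 − M/2} for ω₁ > 1. -/
theorem C234_two_sided_bound (β M : ℝ) (hβ0 : 0 ≤ β) (hβ1 : β ≤ 1) (hM : 6 < M) :
    ∃ c C : ℝ, 0 < c ∧ 0 < C ∧ ∀ ω₁ : ℝ, 1 < ω₁ →
      c * ω₁ ^ (2 * β - 1/2 - M / 2) ≤ C234 β (n01 M) (n01 M) (n01 M) ω₁ ∧
      C234 β (n01 M) (n01 M) (n01 M) ω₁ ≤ C * ω₁ ^ (2 * β - 1/2 - M / 2) := by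
  have hβM : β + 5 / 4 < M / 2 := by linarith
  set A := ∫ ω, jb ω ^ (β + 4⁻¹ - M / 2)
  have hA : 0 < A :=
    integral_pos_of_integrable_nonneg_nonzero (x := 0)
      (continuous_jb.rpow_const fun ω => Or.inl (jb_pos ω).ne') (integrable_jb_rpow (by linarith))
      (fun ω => Real.rpow_nonneg (jb_pos ω).le _) (Real.rpow_pos_of_pos (jb_pos 0) _).ne'
  refine ⟨64 * π ^ 3 * ((4 : ℝ)⁻¹ ^ β * (3 ^ (-(M / 2))) ^ 3 / 4),
    64 * π ^ 3 * (2 ^ (M / 2 - β) * A ^ 2), by positivity, by positivity, fun ω₁ hω₁ => ?_⟩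
  have hω₁₀ : 0 < ω₁ := by linarith
  have hprefactor : 0 ≤ 64 * π ^ 3 * ω₁ ^ (β - 1 / 2) := by positivity
  have hpow : ω₁ ^ (2 * β - 1 / 2 - M / 2) = ω₁ ^ (β - 1 / 2) * ω₁ ^ (β - M / 2) := by
    rw [← Real.rpow_add hω₁₀]; ring_nf
  rw [C234_n01_eq_integral, hpow]
  constructor
  · have h := mul_le_mul_of_nonneg_left (le_integral_c234Integrand hβ0 hβM hω₁.le) hprefactor
    linear_combination h
  · have h := mul_le_mul_of_nonneg_left (integral_c234Integrand_le hβ0 hβM hω₁₀) hprefactor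
    linear_combination h
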